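/- arXiv:2011.08058 — 4 statements merged into one kernel-verified Lean document; each statement's English description precedes it below -/
import Mathlib

section
/- Pointwise information Gamma calculus identity (Lemma 3.2, first equality): for every smooth function f : ℝ^d → ℝ and every x ∈ ℝ^d, Γ₂(f,f)(x) + Γ_I(f,f)(x) = ‖∇²f(x)‖_F² − ⟨∇²(log π)(x) ∇f(x), ∇f(x)⟩ − ⟨γ(x), ∇²f(x) ∇f(x)⟩ + Δf(x)·⟨∇f(x), γ(x)⟩ + ⟨∇f(x), ∇(log π)(x)⟩·⟨∇f(x), γ(x)⟩, where ∇²f denotes the Hessian matrix of f and ‖·‖_F the Frobenius norm. -/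
open MeasureTheory
open scoped BigOperators

noncomputable section

/-- `i`-th partial derivative of `f` at `x`, in the coordinate direction `i`. -/
def pderiv' {d : ℕ} (f : EuclideanSpace ℝ (Fin d) → ℝ) (i : Fin d)
    (x : EuclideanSpace ℝ (Fin d)) : ℝ :=
  fderiv ℝ f x (EuclideanSpace.single i 1)

/-- second partial derivative `∂_i ∂_j f` at `x`. -/
def pderiv2 {d : ℕ} (f : EuclideanSpace ℝ (Fin d) → ℝ) (i j : Fin d)
    (x : EuclideanSpace ℝ (Fin d)) : ℝ :=
  pderiv' (fun y => pderiv' f j y) i x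

/-- Laplacian `Δf`. -/
def lap {d : ℕ} (f : EuclideanSpace ℝ (Fin d) → ℝ) (x : EuclideanSpace ℝ (Fin d)) : ℝ :=
  ∑ i, pderiv2 f i i x

/-- carré du champ `Γ₁(g,h) = ⟨∇g, ∇h⟩`. -/
def Gamma1 {d : ℕ} (g h : EuclideanSpace ℝ (Fin d) → ℝ) (x : EuclideanSpace ℝ (Fin d)) : ℝ :=
  ∑ i, pderiv' g i x * pderiv' h i x

/-- generator `L̃ h = ⟨∇ log π, ∇h⟩ + Δh`. -/
def genL {d : ℕ} (π h : EuclideanSpace ℝ (Fin d) → ℝ) (x : EuclideanSpace ℝ (Fin d)) : ℝ :=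
  Gamma1 (fun y => Real.log (π y)) h x + lap h x

/-- Gamma two operator `Γ₂(f,f) = ½ L̃ Γ₁(f,f) − Γ₁(L̃f, f)`. -/
def Gamma2 {d : ℕ} (π f : EuclideanSpace ℝ (Fin d) → ℝ) (x : EuclideanSpace ℝ (Fin d)) : ℝ :=
  (1/2 : ℝ) * genL π (fun y => Gamma1 f f y) x - Gamma1 (fun y => genL π f y) f x

/-- information Gamma operator `Γ_I(f,f) = −½⟨γ, ∇Γ₁(f,f)⟩ + (L̃f)·⟨∇f, γ⟩`. -/
def GammaI {d : ℕ} (π : EuclideanSpace ℝ (Fin d) → ℝ)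
    (γ : EuclideanSpace ℝ (Fin d) → EuclideanSpace ℝ (Fin d))
    (f : EuclideanSpace ℝ (Fin d) → ℝ) (x : EuclideanSpace ℝ (Fin d)) : ℝ :=
  -(1/2 : ℝ) * (∑ i, γ x i * pderiv' (fun y => Gamma1 f f y) i x)
    + genL π f x * (∑ i, pderiv' f i x * γ x i)

/-- the tensor `ℜ` of the paper:
`ℜ_{ij} = −∂²_{ij} log π + ((3−2d)/8) γ_i γ_j − (1/8) δ_{ij} Σ_k γ_k²
          + ½(γ_i ∂_j log π + γ_j ∂_i log π)`. -/
def Rtensor {d : ℕ} (π : EuclideanSpace ℝ (Fin d) → ℝ)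
    (γ : EuclideanSpace ℝ (Fin d) → EuclideanSpace ℝ (Fin d))
    (i j : Fin d) (x : EuclideanSpace ℝ (Fin d)) : ℝ :=
  -pderiv2 (fun y => Real.log (π y)) i j x
    + ((3 - 2 * (d : ℝ)) / 8) * γ x i * γ x j
    - (1/8 : ℝ) * (if i = j then ∑ k, (γ x k) ^ 2 else 0)
    + (1/2 : ℝ) * (γ x i * pderiv' (fun y => Real.log (π y)) j x
        + γ x j * pderiv' (fun y => Real.log (π y)) i x)

/-- the modified Hessian matrix `𝔥ess f`. -/
def hessM {d : ℕ} (γ : EuclideanSpace ℝ (Fin d) → EuclideanSpace ℝ (Fin d))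
    (f : EuclideanSpace ℝ (Fin d) → ℝ) (i j : Fin d) (x : EuclideanSpace ℝ (Fin d)) : ℝ :=
  if i = j then
    pderiv2 f i i x + (1/2 : ℝ) * (∑ k, γ x k * pderiv' f k x)
      - (1/2 : ℝ) * γ x i * pderiv' f i x
  else
    pderiv2 f i j x - (1/4 : ℝ) * (γ x i * pderiv' f j x + γ x j * pderiv' f i x)

/-- right-hand side of the Fokker–Planck equation `−∇·(p b) + Δp` with drift
`b = ∇ log π − γ`, evaluated at a density `p`. -/
def FPrhs {d : ℕ} (π : EuclideanSpace ℝ (Fin d) → ℝ)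
    (γ : EuclideanSpace ℝ (Fin d) → EuclideanSpace ℝ (Fin d))
    (p : EuclideanSpace ℝ (Fin d) → ℝ) (x : EuclideanSpace ℝ (Fin d)) : ℝ :=
  -(∑ i, pderiv' (fun y => p y * (pderiv' (fun z => Real.log (π z)) i y - γ y i)) i x)
    + lap p x

/-- `L̃* p = −∇·(p ∇ log π) + Δp`. -/
def Ltilstar {d : ℕ} (π p : EuclideanSpace ℝ (Fin d) → ℝ)
    (x : EuclideanSpace ℝ (Fin d)) : ℝ :=
  -(∑ i, pderiv' (fun y => p y * pderiv' (fun z => Real.log (π z)) i y) i x) + lap p x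

/-- Arnold–Carlen tensor `(ℜ_AC)_{ij} = −∂²_{ij} log π − ½(∂_i γ_j + ∂_j γ_i)`. -/
def RAC {d : ℕ} (π : EuclideanSpace ℝ (Fin d) → ℝ)
    (γ : EuclideanSpace ℝ (Fin d) → EuclideanSpace ℝ (Fin d))
    (i j : Fin d) (x : EuclideanSpace ℝ (Fin d)) : ℝ :=
  -pderiv2 (fun y => Real.log (π y)) i j x
    - (1/2 : ℝ) * (pderiv' (fun y => γ y j) i x + pderiv' (fun y => γ y i) j x)


/-!
Bochner's formula `½ Δ Γ₁(f,f) = ‖∇²f‖² + Γ₁(Δf, f)` (the third derivatives commute) makes the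
third-order terms of `½ L̃ Γ₁(f,f)` and `Γ₁(L̃f, f)` cancel; so do the terms `⟨∇ log π, ∇²f ∇f⟩`,
by symmetry of `∇²f`. What is left of `Γ₂` is the Bakry–Émery expression
`‖∇²f‖² − ⟨∇² log π ∇f, ∇f⟩`. In `Γ_I` one only needs `∇Γ₁(f,f) = 2 ∇²f ∇f`.
-/

section PartialDerivatives

variable {d : ℕ} {f g h : EuclideanSpace ℝ (Fin d) → ℝ} {x : EuclideanSpace ℝ (Fin d)}

lemma pderiv'_add (hg : DifferentiableAt ℝ g x) (hh : DifferentiableAt ℝ h x) (i : Fin d) :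
    pderiv' (fun y => g y + h y) i x = pderiv' g i x + pderiv' h i x := by
  simp [pderiv', fderiv_fun_add hg hh]

lemma pderiv'_mul (hg : DifferentiableAt ℝ g x) (hh : DifferentiableAt ℝ h x) (i : Fin d) :
    pderiv' (fun y => g y * h y) i x = pderiv' g i x * h x + g x * pderiv' h i x := by
  simp only [pderiv', fderiv_fun_mul hg hh, add_apply, smul_apply, smul_eq_mul]
  ring

lemma pderiv'_const_mul (hg : DifferentiableAt ℝ g x) (c : ℝ) (i : Fin d) :
    pderiv' (fun y => c * g y) i x = c * pderiv' g i x := by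
  simp [pderiv', fderiv_const_mul hg]

lemma pderiv'_sum {ι : Type*} {s : Finset ι} {F : ι → EuclideanSpace ℝ (Fin d) → ℝ}
    (hF : ∀ j ∈ s, DifferentiableAt ℝ (F j) x) (i : Fin d) :
    pderiv' (fun y => ∑ j ∈ s, F j y) i x = ∑ j ∈ s, pderiv' (F j) i x := by
  simp [pderiv', fderiv_fun_sum hF]

lemma contDiff_pderiv' {n : WithTop ℕ∞} (hf : ContDiff ℝ (n + 1) f) (i : Fin d) :
    ContDiff ℝ n (fun y => pderiv' f i y) :=
  (hf.fderiv_right le_rfl).clm_apply contDiff_const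

lemma differentiable_pderiv' (hf : ContDiff ℝ 2 f) (i : Fin d) :
    Differentiable ℝ (fun y => pderiv' f i y) :=
  (contDiff_pderiv' (n := 1) hf i).differentiable one_ne_zero

lemma differentiable_pderiv2 (hf : ContDiff ℝ 3 f) (i j : Fin d) :
    Differentiable ℝ (fun y => pderiv2 f i j y) :=
  differentiable_pderiv' (contDiff_pderiv' (n := 2) hf j) i

lemma pderiv2_comm (hf : ContDiffAt ℝ 2 f x) (i j : Fin d) :
    pderiv2 f i j x = pderiv2 f j i x := by
  have hdf : DifferentiableAt ℝ (fderiv ℝ f) x :=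
    (hf.fderiv_right (m := 1) le_rfl).differentiableAt one_ne_zero
  have hsecond : ∀ a b : Fin d, pderiv2 f a b x
      = fderiv ℝ (fderiv ℝ f) x (EuclideanSpace.single a 1) (EuclideanSpace.single b 1) := by
    intro a b
    simp [pderiv2, pderiv', fderiv_clm_apply hdf (differentiableAt_const _)]
  rw [hsecond, hsecond]
  exact hf.isSymmSndFDerivAt (by simp [minSmoothness_of_isRCLikeNormedField]) _ _

lemma pderiv'_pderiv2_comm (hf : ContDiff ℝ 3 f) (i j : Fin d) :
    pderiv' (fun y => pderiv2 f j i y) j x = pderiv' (fun y => pderiv2 f j j y) i x := by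
  have hij : (fun y => pderiv2 f j i y) = fun y => pderiv2 f i j y :=
    funext fun y => pderiv2_comm ((hf.of_le (by norm_num)).contDiffAt) j i
  rw [hij]
  exact pderiv2_comm (contDiff_pderiv' (n := 2) hf j).contDiffAt j i

end PartialDerivatives

section GammaCalculus

variable {d : ℕ} {f g h : EuclideanSpace ℝ (Fin d) → ℝ} {x : EuclideanSpace ℝ (Fin d)}

lemma Gamma1_comm : Gamma1 g h x = Gamma1 h g x :=
  Finset.sum_congr rfl fun _ _ => mul_comm _ _

lemma pderiv'_Gamma1 (hg : ContDiff ℝ 2 g) (hh : ContDiff ℝ 2 h) (i : Fin d) :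
    pderiv' (fun y => Gamma1 g h y) i x
      = ∑ j, (pderiv2 g i j x * pderiv' h j x + pderiv' g j x * pderiv2 h i j x) := by
  have hdiff : ∀ j ∈ Finset.univ,
      DifferentiableAt ℝ (fun y => pderiv' g j y * pderiv' h j y) x :=
    fun j _ => (differentiable_pderiv' hg j x).mul (differentiable_pderiv' hh j x)
  simp only [Gamma1]
  rw [pderiv'_sum hdiff]
  exact Finset.sum_congr rfl fun j _ =>
    pderiv'_mul (differentiable_pderiv' hg j x) (differentiable_pderiv' hh j x) i

lemma pderiv'_Gamma1_self (hf : ContDiff ℝ 2 f) (i : Fin d) :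
    pderiv' (fun y => Gamma1 f f y) i x = 2 * ∑ j, pderiv2 f i j x * pderiv' f j x := by
  rw [pderiv'_Gamma1 hf hf, Finset.mul_sum]
  exact Finset.sum_congr rfl fun j _ => by ring

lemma pderiv'_lap (hf : ContDiff ℝ 3 f) (i : Fin d) :
    pderiv' (fun y => lap f y) i x = ∑ j, pderiv' (fun y => pderiv2 f j j y) i x :=
  pderiv'_sum (fun j _ => differentiable_pderiv2 hf j j x) i

lemma lap_Gamma1_self (hf : ContDiff ℝ 3 f) :
    lap (fun y => Gamma1 f f y) x
      = 2 * ∑ i, ∑ j, pderiv2 f i j x ^ 2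
        + 2 * Gamma1 (fun y => lap f y) f x := by
  have hf2 : ContDiff ℝ 2 f := hf.of_le (by norm_num)
  have hdiff : ∀ j, ∀ i ∈ Finset.univ,
      DifferentiableAt ℝ (fun y => pderiv2 f j i y * pderiv' f i y) x :=
    fun j i _ => (differentiable_pderiv2 hf j i x).mul (differentiable_pderiv' hf2 i x)
  have hsecond : ∀ j, pderiv2 (fun y => Gamma1 f f y) j j x
      = 2 * ∑ i,
          (pderiv2 f j i x ^ 2 + pderiv' (fun y => pderiv2 f j j y) i x * pderiv' f i x) := by
    intro j
    have hfirst : (fun y => pderiv' (fun z => Gamma1 f f z) j y)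
        = fun y => 2 * ∑ i, pderiv2 f j i y * pderiv' f i y :=
      funext fun y => pderiv'_Gamma1_self hf2 j
    rw [pderiv2, hfirst, pderiv'_const_mul (DifferentiableAt.fun_sum (hdiff j)),
      pderiv'_sum (hdiff j)]
    refine congrArg (2 * ·) (Finset.sum_congr rfl fun i _ => ?_)
    rw [pderiv'_mul (differentiable_pderiv2 hf j i x) (differentiable_pderiv' hf2 i x),
      pderiv'_pderiv2_comm hf]
    simp only [pderiv2]
    ring
  rw [Gamma1]
  simp only [pderiv'_lap hf]
  simp only [lap, hsecond, mul_add, Finset.mul_sum, Finset.sum_mul, Finset.sum_add_distrib]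
  exact congrArg _ Finset.sum_comm

lemma pderiv'_genL {π : EuclideanSpace ℝ (Fin d) → ℝ}
    (hπ : ContDiff ℝ 2 (fun y => Real.log (π y))) (hf : ContDiff ℝ 3 f) (i : Fin d) :
    pderiv' (fun y => genL π f y) i x
      = ∑ j, (pderiv2 (fun y => Real.log (π y)) i j x * pderiv' f j x
          + pderiv' (fun y => Real.log (π y)) j x * pderiv2 f i j x)
        + pderiv' (fun y => lap f y) i x := by
  have hf2 : ContDiff ℝ 2 f := hf.of_le (by norm_num)
  have hdiffΓ : DifferentiableAt ℝ (fun y => Gamma1 (fun z => Real.log (π z)) f y) x :=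
    DifferentiableAt.fun_sum fun j _ =>
      (differentiable_pderiv' hπ j x).mul (differentiable_pderiv' hf2 j x)
  have hdiffΔ : DifferentiableAt ℝ (fun y => lap f y) x :=
    DifferentiableAt.fun_sum fun j _ => differentiable_pderiv2 hf j j x
  rw [← pderiv'_Gamma1 hπ hf2]
  exact pderiv'_add hdiffΓ hdiffΔ i

lemma Gamma2_eq {π : EuclideanSpace ℝ (Fin d) → ℝ}
    (hπ : ContDiff ℝ 2 (fun y => Real.log (π y))) (hf : ContDiff ℝ 3 f) :
    Gamma2 π f x
      = ∑ i, ∑ j, pderiv2 f i j x ^ 2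
        - ∑ i, ∑ j, pderiv2 (fun y => Real.log (π y)) i j x * pderiv' f i x * pderiv' f j x := by
  have hf2 : ContDiff ℝ 2 f := hf.of_le (by norm_num)
  rw [Gamma2, genL, lap_Gamma1_self hf, Gamma1, Gamma1, Gamma1]
  simp only [pderiv'_Gamma1_self hf2, pderiv'_genL hπ hf]
  have hcross :
      ∑ j, pderiv' (fun y => Real.log (π y)) j x * (2 * ∑ i, pderiv2 f j i x * pderiv' f i x)
      = 2 * ∑ i, (∑ j, pderiv' (fun y => Real.log (π y)) j x * pderiv2 f i j x) * pderiv' f i x := by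
    simp only [Finset.mul_sum, Finset.sum_mul]
    rw [Finset.sum_comm]
    refine Finset.sum_congr rfl fun i _ => Finset.sum_congr rfl fun j _ => ?_
    rw [pderiv2_comm hf2.contDiffAt j i]
    ring
  rw [hcross]
  simp only [Finset.sum_add_distrib, add_mul, Finset.sum_mul]
  have hhess : ∑ i, ∑ j, pderiv2 (fun y => Real.log (π y)) i j x * pderiv' f j x * pderiv' f i x
      = ∑ i, ∑ j, pderiv2 (fun y => Real.log (π y)) i j x * pderiv' f i x * pderiv' f j x :=
    Finset.sum_congr rfl fun i _ => Finset.sum_congr rfl fun j _ => mul_right_comm _ _ _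
  rw [hhess]
  ring

lemma GammaI_eq {π : EuclideanSpace ℝ (Fin d) → ℝ}
    {γ : EuclideanSpace ℝ (Fin d) → EuclideanSpace ℝ (Fin d)} (hf : ContDiff ℝ 2 f) :
    GammaI π γ f x
      = -∑ i, γ x i * ∑ j, pderiv2 f i j x * pderiv' f j x
        + genL π f x * ∑ i, pderiv' f i x * γ x i := by
  simp only [GammaI, pderiv'_Gamma1_self hf, mul_left_comm _ (2 : ℝ), ← Finset.mul_sum]
  ring

end GammaCalculus

theorem information_gamma_identity_first_general
    (d : ℕ)
    (π : EuclideanSpace ℝ (Fin d) → ℝ) (hπ : ContDiff ℝ (⊤ : ℕ∞) π)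
    (hπpos : ∀ x, 0 < π x)
    (γ : EuclideanSpace ℝ (Fin d) → EuclideanSpace ℝ (Fin d))
    (f : EuclideanSpace ℝ (Fin d) → ℝ) (hf : ContDiff ℝ (⊤ : ℕ∞) f)
    (x : EuclideanSpace ℝ (Fin d)) :
    Gamma2 π f x + GammaI π γ f x =
      (∑ i, ∑ j, (pderiv2 f i j x) ^ 2)
        - (∑ i, ∑ j, pderiv2 (fun y => Real.log (π y)) i j x * pderiv' f i x * pderiv' f j x)
        - (∑ i, γ x i * ∑ j, pderiv2 f i j x * pderiv' f j x)
        + lap f x * (∑ i, pderiv' f i x * γ x i)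
        + (∑ i, pderiv' f i x * pderiv' (fun y => Real.log (π y)) i x)
            * (∑ i, pderiv' f i x * γ x i) := by
  have hlog : ContDiff ℝ 2 (fun y => Real.log (π y)) :=
    (hπ.log fun y => (hπpos y).ne').of_le (by norm_cast)
  have hf3 : ContDiff ℝ 3 f := hf.of_le (by norm_cast)
  rw [Gamma2_eq hlog hf3, GammaI_eq (hf3.of_le (by norm_num)), genL, Gamma1_comm, Gamma1]
  ring

/-- Lemma 3.2, first equality: pointwise information Gamma calculus identity. -/
theorem information_gamma_identity_first
    (d : ℕ) (hd : 1 ≤ d)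
    (π : EuclideanSpace ℝ (Fin d) → ℝ) (hπ : ContDiff ℝ (⊤ : ℕ∞) π)
    (hπpos : ∀ x, 0 < π x)
    (γ : EuclideanSpace ℝ (Fin d) → EuclideanSpace ℝ (Fin d))
    (hγ : ContDiff ℝ (⊤ : ℕ∞) γ)
    (f : EuclideanSpace ℝ (Fin d) → ℝ) (hf : ContDiff ℝ (⊤ : ℕ∞) f)
    (x : EuclideanSpace ℝ (Fin d)) :
    Gamma2 π f x + GammaI π γ f x =
      (∑ i, ∑ j, (pderiv2 f i j x) ^ 2)
        - (∑ i, ∑ j, pderiv2 (fun y => Real.log (π y)) i j x * pderiv' f i x * pderiv' f j x)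
        - (∑ i, γ x i * ∑ j, pderiv2 f i j x * pderiv' f j x)
        + lap f x * (∑ i, pderiv' f i x * γ x i)
        + (∑ i, pderiv' f i x * pderiv' (fun y => Real.log (π y)) i x)
            * (∑ i, pderiv' f i x * γ x i) :=
  information_gamma_identity_first_general d π hπ hπpos γ f hf x
end
end

section
/- Pointwise information Gamma calculus identity (Lemma 3.2, final form): for every smooth function f : ℝ^d → ℝ and every x ∈ ℝ^d, Γ₂(f,f)(x) + Γ_I(f,f)(x) = ‖𝔥ess f(x)‖_F² + Σ_{i,j} ℜ_{ij}(x) ∂f/∂x_i(x) ∂f/∂x_j(x). -/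
open MeasureTheory
open scoped BigOperators

noncomputable section

/-!
The Leibniz rule `∂ᵢ Γ₁(g, h) = Γ₁(∂ᵢ g, h) + Γ₁(g, ∂ᵢ h)`, which holds because second
partial derivatives commute, reduces both Γ-operators to pointwise expressions: Bochner's
formula `Γ₂(f,f) = ‖∇²f‖² - ∇² log π (∇f, ∇f)`, and `Γ_I(f,f) = -∇²f(γ, ∇f) + L̃f ⟨γ, ∇f⟩`.
Since `𝔥ess f = ∇²f - ¼ (γ ⊗ ∇f + ∇f ⊗ γ) + ½ ⟨γ, ∇f⟩ I`, expanding its Frobenius norm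
produces `(2d - 3)/8 ⟨γ, ∇f⟩²`, which the coefficient `(3 - 2d)/8` of `ℜ` cancels; all
remaining terms match.
-/

section FrobeniusSums

variable {ι : Type*} [Fintype ι]

theorem sum_sum_add_ite_sq [DecidableEq ι] (A : ι → ι → ℝ) (c : ℝ) :
    ∑ i, ∑ j, (A i j + if i = j then c else 0) ^ 2
      = ∑ i, ∑ j, A i j ^ 2 + 2 * c * ∑ i, A i i + Fintype.card ι * c ^ 2 := by
  have expand : ∀ i j, (A i j + if i = j then c else 0) ^ 2
      = A i j ^ 2 + if i = j then 2 * c * A i j + c ^ 2 else 0 := by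
    intro i j
    split_ifs <;> ring
  simp only [expand, Finset.sum_add_distrib, Finset.sum_ite_eq, Finset.mem_univ, if_true,
    Finset.mul_sum, Finset.sum_const, Finset.card_univ, nsmul_eq_mul]
  ring

theorem sum_sum_sub_symm_sq (H : ι → ι → ℝ) (hH : ∀ i j, H i j = H j i) (F G : ι → ℝ) :
    ∑ i, ∑ j, (H i j - (1/4 : ℝ) * (G i * F j + G j * F i)) ^ 2
      = ∑ i, ∑ j, H i j ^ 2 - ∑ i, ∑ j, G i * H i j * F j
        + (1/8 : ℝ) * ((∑ i, G i ^ 2) * ∑ i, F i ^ 2)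
        + (1/8 : ℝ) * (∑ i, G i * F i) ^ 2 := by
  have expand : ∀ i j, (H i j - (1/4 : ℝ) * (G i * F j + G j * F i)) ^ 2
      = H i j ^ 2 - (1/2 : ℝ) * (G i * H i j * F j) - (1/2 : ℝ) * (G j * H j i * F i)
        + (1/16 : ℝ) * (G i ^ 2 * F j ^ 2) + (1/16 : ℝ) * (G j ^ 2 * F i ^ 2)
        + (1/8 : ℝ) * (G i * F i * (G j * F j)) := by
    intro i j
    rw [hH j i]
    ring
  simp only [expand, Finset.sum_add_distrib, Finset.sum_sub_distrib, ← Finset.mul_sum]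
  rw [Finset.sum_comm (f := fun i j => G j * H j i * F i),
    Finset.sum_comm (f := fun i j => G j ^ 2 * F i ^ 2)]
  simp only [← Finset.mul_sum, ← Finset.sum_mul]
  ring

end FrobeniusSums

namespace InformationGamma

variable {d : ℕ} {f g h : EuclideanSpace ℝ (Fin d) → ℝ} {x : EuclideanSpace ℝ (Fin d)}

theorem contDiff_pderiv' {n : WithTop ℕ∞} (hf : ContDiff ℝ (n + 1) f) (i : Fin d) :
    ContDiff ℝ n (pderiv' f i) :=
  ((ContinuousLinearMap.apply ℝ ℝ (EuclideanSpace.single i 1)).contDiff.comp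
    (hf.fderiv_right le_rfl) :)

theorem differentiable_pderiv' (hf : ContDiff ℝ 2 f) (i : Fin d) :
    Differentiable ℝ (pderiv' f i) :=
  (contDiff_pderiv' hf i).differentiable one_ne_zero

theorem pderiv'_pderiv' (f : EuclideanSpace ℝ (Fin d) → ℝ) (i j : Fin d) :
    pderiv' (pderiv' f j) i = pderiv2 f i j :=
  rfl

theorem pderiv'_fun_add (hf : DifferentiableAt ℝ f x) (hg : DifferentiableAt ℝ g x)
    (i : Fin d) : pderiv' (fun y => f y + g y) i x = pderiv' f i x + pderiv' g i x := by
  simp only [pderiv', fderiv_fun_add hf hg, add_apply]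

theorem pderiv'_fun_mul (hf : DifferentiableAt ℝ f x) (hg : DifferentiableAt ℝ g x)
    (i : Fin d) :
    pderiv' (fun y => f y * g y) i x = pderiv' f i x * g x + f x * pderiv' g i x := by
  simp only [pderiv', fderiv_fun_mul hf hg, add_apply, smul_apply, smul_eq_mul]
  ring

theorem pderiv'_fun_sum {ι : Type*} {s : Finset ι} {F : ι → EuclideanSpace ℝ (Fin d) → ℝ}
    (hF : ∀ k ∈ s, DifferentiableAt ℝ (F k) x) (i : Fin d) :
    pderiv' (fun y => ∑ k ∈ s, F k y) i x = ∑ k ∈ s, pderiv' (F k) i x := by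
  simp only [pderiv', fderiv_fun_sum hF, sum_apply]

theorem pderiv2_comm (hf : ContDiff ℝ 2 f) (i j : Fin d) (x : EuclideanSpace ℝ (Fin d)) :
    pderiv2 f i j x = pderiv2 f j i x := by
  have hdiff : DifferentiableAt ℝ (fderiv ℝ f) x :=
    (hf.fderiv_right (m := 1) le_rfl).differentiable one_ne_zero x
  have second : ∀ a b : Fin d, pderiv2 f a b x =
      fderiv ℝ (fderiv ℝ f) x (EuclideanSpace.single a 1) (EuclideanSpace.single b 1) := by
    intro a b
    simp [pderiv2, pderiv', fderiv_clm_apply hdiff (differentiableAt_const _)]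
  rw [second, second]
  exact hf.contDiffAt.isSymmSndFDerivAt (by simp) _ _

theorem differentiable_lap (hf : ContDiff ℝ 3 f) : Differentiable ℝ (lap f) := by
  have hlap : lap f = fun y => ∑ i, pderiv2 f i i y := rfl
  rw [hlap]
  exact Differentiable.fun_sum fun i _ =>
    differentiable_pderiv' (contDiff_pderiv' (n := 2) hf i) i

theorem gamma1_comm (g h : EuclideanSpace ℝ (Fin d) → ℝ) (x : EuclideanSpace ℝ (Fin d)) :
    Gamma1 g h x = Gamma1 h g x := by
  simp only [Gamma1, mul_comm]

theorem contDiff_gamma1 {n : WithTop ℕ∞} (hg : ContDiff ℝ (n + 1) g)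
    (hh : ContDiff ℝ (n + 1) h) : ContDiff ℝ n (Gamma1 g h) :=
  ContDiff.sum fun k _ => (contDiff_pderiv' hg k).mul (contDiff_pderiv' hh k)

theorem gamma1_fun_add_left (hg : DifferentiableAt ℝ g x) (hh : DifferentiableAt ℝ h x)
    (f : EuclideanSpace ℝ (Fin d) → ℝ) :
    Gamma1 (fun y => g y + h y) f x = Gamma1 g f x + Gamma1 h f x := by
  simp only [Gamma1, pderiv'_fun_add hg hh, add_mul, Finset.sum_add_distrib]

theorem gamma1_lap_left (hf : ContDiff ℝ 3 f) (h : EuclideanSpace ℝ (Fin d) → ℝ)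
    (x : EuclideanSpace ℝ (Fin d)) :
    Gamma1 (lap f) h x = ∑ i, Gamma1 (pderiv2 f i i) h x := by
  have hdiff : ∀ i ∈ Finset.univ, DifferentiableAt ℝ (pderiv2 f i i) x := fun i _ =>
    differentiable_pderiv' (contDiff_pderiv' (n := 2) hf i) i x
  have hlap : lap f = fun y => ∑ i, pderiv2 f i i y := rfl
  simp only [Gamma1, hlap, pderiv'_fun_sum hdiff, Finset.sum_mul]
  exact Finset.sum_comm

theorem pderiv'_gamma1 (hg : ContDiff ℝ 2 g) (hh : ContDiff ℝ 2 h) (i : Fin d)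
    (x : EuclideanSpace ℝ (Fin d)) :
    pderiv' (Gamma1 g h) i x = Gamma1 (pderiv' g i) h x + Gamma1 g (pderiv' h i) x := by
  unfold Gamma1
  rw [pderiv'_fun_sum fun k _ => (differentiable_pderiv' hg k x).fun_mul
    (differentiable_pderiv' hh k x), ← Finset.sum_add_distrib]
  refine Finset.sum_congr rfl fun k _ => ?_
  rw [pderiv'_fun_mul (differentiable_pderiv' hg k x) (differentiable_pderiv' hh k x)]
  simp only [pderiv'_pderiv', pderiv2_comm hg i k, pderiv2_comm hh i k]

theorem pderiv'_gamma1_self (hf : ContDiff ℝ 2 f) (i : Fin d) (x : EuclideanSpace ℝ (Fin d)) :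
    pderiv' (Gamma1 f f) i x = 2 * ∑ j, pderiv2 f i j x * pderiv' f j x := by
  rw [pderiv'_gamma1 hf hf, gamma1_comm f (pderiv' f i), ← two_mul, Gamma1]
  simp only [pderiv'_pderiv']
  congr 1
  exact Finset.sum_congr rfl fun j _ => by rw [pderiv2_comm hf]

theorem sum_mul_pderiv'_gamma1_self (hf : ContDiff ℝ 2 f) (v : Fin d → ℝ)
    (x : EuclideanSpace ℝ (Fin d)) :
    ∑ i, v i * pderiv' (Gamma1 f f) i x
      = 2 * ∑ i, ∑ j, v i * pderiv2 f i j x * pderiv' f j x := by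
  simp only [pderiv'_gamma1_self hf, Finset.mul_sum, mul_assoc, mul_left_comm (v _)]

theorem gamma1_gamma1_left (hg : ContDiff ℝ 2 g) (hf : ContDiff ℝ 2 f)
    (x : EuclideanSpace ℝ (Fin d)) :
    Gamma1 (Gamma1 g f) f x
      = ∑ i, ∑ j, pderiv2 g i j x * pderiv' f i x * pderiv' f j x
        + ∑ i, ∑ j, pderiv' g i x * pderiv2 f i j x * pderiv' f j x := by
  rw [Gamma1]
  simp only [pderiv'_gamma1 hg hf, Gamma1, pderiv'_pderiv', add_mul, Finset.sum_mul,
    Finset.sum_add_distrib]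
  rw [Finset.sum_comm, Finset.sum_comm (γ := Fin d) (f := fun j i => pderiv' g i x * _ * _)]

theorem lap_gamma1_self (hf : ContDiff ℝ 3 f) (x : EuclideanSpace ℝ (Fin d)) :
    lap (Gamma1 f f) x = 2 * (∑ i, ∑ j, pderiv2 f i j x ^ 2 + Gamma1 (lap f) f x) := by
  have hf2 : ContDiff ℝ 2 f := hf.of_le (by norm_num)
  have hdf : ∀ i, ContDiff ℝ 2 (pderiv' f i) := contDiff_pderiv' (n := 2) hf
  have hdiff : ∀ i, Differentiable ℝ (Gamma1 (pderiv' f i) f) := fun i =>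
    (contDiff_gamma1 (n := 1) (hdf i) hf2).differentiable one_ne_zero
  have second : ∀ i, pderiv2 (Gamma1 f f) i i x = Gamma1 (pderiv2 f i i) f x
      + 2 * Gamma1 (pderiv' f i) (pderiv' f i) x + Gamma1 f (pderiv2 f i i) x := by
    intro i
    have first : pderiv' (Gamma1 f f) i = fun y => Gamma1 (pderiv' f i) f y
        + Gamma1 f (pderiv' f i) y := funext (pderiv'_gamma1 hf2 hf2 i)
    have hdiff' : DifferentiableAt ℝ (Gamma1 f (pderiv' f i)) x := by
      rw [show Gamma1 f (pderiv' f i) = Gamma1 (pderiv' f i) f from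
        funext (gamma1_comm _ _)]
      exact hdiff i x
    rw [← pderiv'_pderiv', first, pderiv'_fun_add (hdiff i x) hdiff',
      pderiv'_gamma1 (hdf i) hf2, pderiv'_gamma1 hf2 (hdf i), pderiv'_pderiv']
    ring
  have hessian_sq : ∑ i, Gamma1 (pderiv' f i) (pderiv' f i) x
      = ∑ i, ∑ j, pderiv2 f i j x ^ 2 := by
    simp only [Gamma1, pderiv'_pderiv', sq]
    exact Finset.sum_comm
  simp only [lap, second, Finset.sum_add_distrib, ← Finset.mul_sum, hessian_sq,
    gamma1_lap_left hf, gamma1_comm f]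
  ring

theorem gamma2_bochner (π : EuclideanSpace ℝ (Fin d) → ℝ)
    (hV : ContDiff ℝ 2 (fun y => Real.log (π y))) (hf : ContDiff ℝ 3 f)
    (x : EuclideanSpace ℝ (Fin d)) :
    Gamma2 π f x = ∑ i, ∑ j, pderiv2 f i j x ^ 2
      - ∑ i, ∑ j, pderiv2 (fun y => Real.log (π y)) i j x * pderiv' f i x * pderiv' f j x := by
  have hf2 : ContDiff ℝ 2 f := hf.of_le (by norm_num)
  have hdrift : DifferentiableAt ℝ (Gamma1 (fun y => Real.log (π y)) f) x :=
    (contDiff_gamma1 (n := 1) hV hf2).differentiable one_ne_zero x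
  have hdrift_gamma1 : Gamma1 (fun y => Real.log (π y)) (Gamma1 f f) x
      = 2 * ∑ i, ∑ j, pderiv' (fun y => Real.log (π y)) i x * pderiv2 f i j x * pderiv' f j x :=
    sum_mul_pderiv'_gamma1_self hf2 _ x
  unfold Gamma2 genL
  rw [gamma1_fun_add_left hdrift (differentiable_lap hf x), gamma1_gamma1_left hV hf2,
    hdrift_gamma1, lap_gamma1_self hf]
  ring

theorem gammaI_eq (π : EuclideanSpace ℝ (Fin d) → ℝ)
    (γ : EuclideanSpace ℝ (Fin d) → EuclideanSpace ℝ (Fin d)) (hf : ContDiff ℝ 2 f)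
    (x : EuclideanSpace ℝ (Fin d)) :
    GammaI π γ f x = -∑ i, ∑ j, γ x i * pderiv2 f i j x * pderiv' f j x
      + genL π f x * ∑ k, γ x k * pderiv' f k x := by
  unfold GammaI
  rw [sum_mul_pderiv'_gamma1_self hf (fun i => γ x i)]
  simp only [mul_comm (pderiv' f _ x)]
  ring

theorem hessM_eq (γ : EuclideanSpace ℝ (Fin d) → EuclideanSpace ℝ (Fin d))
    (f : EuclideanSpace ℝ (Fin d) → ℝ) (i j : Fin d) (x : EuclideanSpace ℝ (Fin d)) :
    hessM γ f i j x
      = (pderiv2 f i j x - (1/4 : ℝ) * (γ x i * pderiv' f j x + γ x j * pderiv' f i x))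
        + if i = j then (1/2 : ℝ) * ∑ k, γ x k * pderiv' f k x else 0 := by
  unfold hessM
  split_ifs with hij
  · subst hij
    ring
  · ring

theorem sum_sum_hessM_sq (γ : EuclideanSpace ℝ (Fin d) → EuclideanSpace ℝ (Fin d))
    (hf : ContDiff ℝ 2 f) (x : EuclideanSpace ℝ (Fin d)) :
    ∑ i, ∑ j, hessM γ f i j x ^ 2
      = ∑ i, ∑ j, pderiv2 f i j x ^ 2 - ∑ i, ∑ j, γ x i * pderiv2 f i j x * pderiv' f j x
        + (1/8 : ℝ) * ((∑ k, γ x k ^ 2) * ∑ k, pderiv' f k x ^ 2)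
        + (∑ k, γ x k * pderiv' f k x) * lap f x
        + ((2 * d - 3) / 8 : ℝ) * (∑ k, γ x k * pderiv' f k x) ^ 2 := by
  simp only [hessM_eq]
  rw [sum_sum_add_ite_sq, sum_sum_sub_symm_sq _ (fun i j => pderiv2_comm hf i j x)]
  simp only [Fintype.card_fin, Finset.sum_sub_distrib, ← Finset.mul_sum, Finset.sum_add_distrib,
    lap]
  ring

theorem sum_sum_Rtensor_mul (π : EuclideanSpace ℝ (Fin d) → ℝ)
    (γ : EuclideanSpace ℝ (Fin d) → EuclideanSpace ℝ (Fin d)) (x : EuclideanSpace ℝ (Fin d))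
    (v : Fin d → ℝ) :
    ∑ i, ∑ j, Rtensor π γ i j x * v i * v j
      = -∑ i, ∑ j, pderiv2 (fun y => Real.log (π y)) i j x * v i * v j
        + ((3 - 2 * d) / 8 : ℝ) * (∑ k, γ x k * v k) ^ 2
        - (1/8 : ℝ) * ((∑ k, γ x k ^ 2) * ∑ k, v k ^ 2)
        + (∑ k, γ x k * v k) * ∑ k, pderiv' (fun y => Real.log (π y)) k x * v k := by
  set U := fun k => pderiv' (fun y => Real.log (π y)) k x
  have expand : ∀ i j, Rtensor π γ i j x * v i * v j
      = -(pderiv2 (fun y => Real.log (π y)) i j x * v i * v j)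
        + ((3 - 2 * d) / 8 : ℝ) * (γ x i * v i * (γ x j * v j))
        + (1/2 : ℝ) * (γ x i * v i * (U j * v j)) + (1/2 : ℝ) * (U i * v i * (γ x j * v j))
        - (1/8 : ℝ) * (if i = j then (∑ k, γ x k ^ 2) * v i ^ 2 else 0) := by
    intro i j
    unfold Rtensor
    split_ifs with hij
    · subst hij
      ring
    · ring
  simp only [expand, Finset.sum_add_distrib, Finset.sum_sub_distrib, Finset.sum_neg_distrib,
    ← Finset.mul_sum, Finset.sum_ite_eq, Finset.mem_univ, if_true, ← Finset.sum_mul]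
  ring

end InformationGamma

theorem information_gamma_identity_final_general
    (d : ℕ)
    (π : EuclideanSpace ℝ (Fin d) → ℝ) (hπ : ContDiff ℝ (⊤ : ℕ∞) π)
    (hπpos : ∀ x, 0 < π x)
    (γ : EuclideanSpace ℝ (Fin d) → EuclideanSpace ℝ (Fin d))
    (f : EuclideanSpace ℝ (Fin d) → ℝ) (hf : ContDiff ℝ (⊤ : ℕ∞) f)
    (x : EuclideanSpace ℝ (Fin d)) :
    Gamma2 π f x + GammaI π γ f x =
      (∑ i, ∑ j, (hessM γ f i j x) ^ 2)
        + ∑ i, ∑ j, Rtensor π γ i j x * pderiv' f i x * pderiv' f j x := by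
  have hV : ContDiff ℝ 2 (fun y => Real.log (π y)) :=
    (hπ.of_le (WithTop.coe_le_coe.mpr le_top)).log fun y => (hπpos y).ne'
  have hf3 : ContDiff ℝ 3 f := hf.of_le (WithTop.coe_le_coe.mpr le_top)
  have hf2 : ContDiff ℝ 2 f := hf.of_le (WithTop.coe_le_coe.mpr le_top)
  rw [InformationGamma.gamma2_bochner π hV hf3, InformationGamma.gammaI_eq π γ hf2,
    InformationGamma.sum_sum_hessM_sq γ hf2, InformationGamma.sum_sum_Rtensor_mul]
  unfold genL Gamma1
  ring

/-- Lemma 3.2, final form: `Γ₂(f,f) + Γ_I(f,f) = ‖𝔥ess f‖_F² + ℜ(∇f, ∇f)` pointwise. -/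
theorem information_gamma_identity_final
    (d : ℕ) (hd : 1 ≤ d)
    (π : EuclideanSpace ℝ (Fin d) → ℝ) (hπ : ContDiff ℝ (⊤ : ℕ∞) π)
    (hπpos : ∀ x, 0 < π x)
    (γ : EuclideanSpace ℝ (Fin d) → EuclideanSpace ℝ (Fin d))
    (hγ : ContDiff ℝ (⊤ : ℕ∞) γ)
    (f : EuclideanSpace ℝ (Fin d) → ℝ) (hf : ContDiff ℝ (⊤ : ℕ∞) f)
    (x : EuclideanSpace ℝ (Fin d)) :
    Gamma2 π f x + GammaI π γ f x =
      (∑ i, ∑ j, (hessM γ f i j x) ^ 2)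
        + ∑ i, ∑ j, Rtensor π γ i j x * pderiv' f i x * pderiv' f j x :=
  information_gamma_identity_final_general d π hπ hπpos γ f hf x
end
end

section
/- Completing-the-square linear algebra identity underlying the information Gamma calculus: let d ≥ 1, let H, M ∈ ℝ^{d×d} be symmetric matrices and v, g, u ∈ ℝ^d. Define the matrix 𝔥 ∈ ℝ^{d×d} by 𝔥_{ii} = H_{ii} + ½⟨g, v⟩ − ½ g_i v_i and, for i ≠ j, 𝔥_{ij} = H_{ij} − ¼(g_i v_j + g_j v_i), and the matrix R ∈ ℝ^{d×d} by R_{ij} = −M_{ij} + ((3−2d)/8) g_i g_j − (1/8) δ_{ij} ‖g‖² + ½(g_i u_j + g_j u_i). Then ‖H‖_F² − ⟨M v, v⟩ − ⟨g, H v⟩ + (tr H)·⟨v, g⟩ + ⟨v, u⟩·⟨v, g⟩ = ‖𝔥‖_F² + ⟨R v, v⟩. -/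
/-!
In matrix form `𝔥 = H + ½⟨g, v⟩ I − ¼ (g vᵀ + v gᵀ)` and
`R = −M + ((3 − 2d)/8) g gᵀ − ⅛ ‖g‖² I + ½ (g uᵀ + u gᵀ)`. For symmetric matrices
`‖A‖_F² = tr (A²)` and `tr (H (g vᵀ + v gᵀ)) = 2 ⟨g, H v⟩`; expanding `tr (𝔥²)` and
`⟨R v, v⟩` by bilinearity, the terms in `⟨g, v⟩²` and `‖g‖² ‖v‖²` cancel between them.
-/

namespace Matrix

variable {n α : Type*} [CommRing α]

def symmVecMulVec (x y : n → α) : Matrix n n α := vecMulVec x y + vecMulVec y x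

theorem symmVecMulVec_apply (x y : n → α) (i j : n) :
    symmVecMulVec x y i j = x i * y j + y i * x j := rfl

theorem isSymm_symmVecMulVec (x y : n → α) : (symmVecMulVec x y).IsSymm := by
  simp only [symmVecMulVec, IsSymm, transpose_add, transpose_vecMulVec, add_comm]

variable [Fintype n]

theorem trace_symmVecMulVec (x y : n → α) : trace (symmVecMulVec x y) = 2 * (x ⬝ᵥ y) := by
  rw [symmVecMulVec, trace_add, trace_vecMulVec, trace_vecMulVec, dotProduct_comm y]; ring

theorem IsSymm.dotProduct_mulVec_comm {A : Matrix n n α} (hA : A.IsSymm) (x y : n → α) :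
    x ⬝ᵥ A *ᵥ y = y ⬝ᵥ A *ᵥ x := by
  rw [dotProduct_mulVec, ← mulVec_transpose, hA.eq, dotProduct_comm]

theorem trace_mul_symmVecMulVec {A : Matrix n n α} (hA : A.IsSymm) (x y : n → α) :
    trace (A * symmVecMulVec x y) = 2 * (x ⬝ᵥ A *ᵥ y) := by
  rw [symmVecMulVec, Matrix.mul_add, trace_add, mul_vecMulVec, mul_vecMulVec, trace_vecMulVec,
    trace_vecMulVec, dotProduct_comm, dotProduct_comm (A *ᵥ y), hA.dotProduct_mulVec_comm y]
  ring

theorem trace_symmVecMulVec_mul_self (x y : n → α) :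
    trace (symmVecMulVec x y * symmVecMulVec x y) =
      2 * ((x ⬝ᵥ y) ^ 2 + (x ⬝ᵥ x) * (y ⬝ᵥ y)) := by
  simp only [symmVecMulVec, Matrix.mul_add, Matrix.add_mul, vecMulVec_mul_vecMulVec, trace_add,
    trace_vecMulVec, dotProduct_smul, smul_eq_mul, dotProduct_comm y x]
  ring

theorem dotProduct_vecMulVec_mulVec (w x y v : n → α) :
    w ⬝ᵥ vecMulVec x y *ᵥ v = (w ⬝ᵥ x) * (y ⬝ᵥ v) := by
  rw [vecMulVec_mulVec, op_smul_eq_smul, dotProduct_smul, smul_eq_mul, mul_comm]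

theorem dotProduct_symmVecMulVec_mulVec (x y v : n → α) :
    v ⬝ᵥ symmVecMulVec x y *ᵥ v = 2 * (x ⬝ᵥ v) * (y ⬝ᵥ v) := by
  rw [symmVecMulVec, add_mulVec, dotProduct_add, dotProduct_vecMulVec_mulVec,
    dotProduct_vecMulVec_mulVec, dotProduct_comm v x, dotProduct_comm v y]
  ring

theorem sum_sum_sq_eq_trace_mul_self {A : Matrix n n α} (hA : A.IsSymm) :
    ∑ i, ∑ j, A i j ^ 2 = trace (A * A) := by
  simp only [trace, diag, mul_apply, sq]
  exact Finset.sum_congr rfl fun i _ => Finset.sum_congr rfl fun j _ => by rw [hA.apply]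

theorem sum_sum_mul_mul_eq_dotProduct_mulVec (A : Matrix n n α) (v : n → α) :
    ∑ i, ∑ j, A i j * v i * v j = v ⬝ᵥ A *ᵥ v := by
  simp only [dotProduct, mulVec, Finset.mul_sum]
  exact Finset.sum_congr rfl fun i _ => Finset.sum_congr rfl fun j _ => by ring

theorem trace_mul_self_add_smul_one_add_smul_symmVecMulVec [DecidableEq n] {A : Matrix n n α}
    (hA : A.IsSymm) (a b : α) (x y : n → α) :
    trace ((A + a • 1 + b • symmVecMulVec x y) * (A + a • 1 + b • symmVecMulVec x y)) =
      trace (A * A) + 2 * a * trace A + 4 * b * (x ⬝ᵥ A *ᵥ y) + a ^ 2 * Fintype.card n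
        + 4 * a * b * (x ⬝ᵥ y) + 2 * b ^ 2 * ((x ⬝ᵥ y) ^ 2 + (x ⬝ᵥ x) * (y ⬝ᵥ y)) := by
  have hAS := trace_mul_symmVecMulVec hA x y
  have hSA : trace (symmVecMulVec x y * A) = 2 * (x ⬝ᵥ A *ᵥ y) := by rw [trace_mul_comm, hAS]
  simp only [Matrix.add_mul, Matrix.mul_add, Matrix.smul_mul, Matrix.mul_smul, Matrix.one_mul,
    Matrix.mul_one, trace_add, trace_smul, trace_one, hAS, hSA, trace_symmVecMulVec,
    trace_symmVecMulVec_mul_self, smul_eq_mul]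
  ring

end Matrix

open Matrix in
theorem completing_the_square_identity_general
    (d : ℕ)
    (H M : Matrix (Fin d) (Fin d) ℝ) (hH : H.IsSymm)
    (v g u : Fin d → ℝ)
    (𝔥 R : Matrix (Fin d) (Fin d) ℝ)
    (h𝔥 : ∀ i j, 𝔥 i j =
      if i = j then
        H i i + (1/2 : ℝ) * (∑ k, g k * v k) - (1/2 : ℝ) * g i * v i
      else
        H i j - (1/4 : ℝ) * (g i * v j + g j * v i))
    (hR : ∀ i j, R i j =
      -M i j + ((3 - 2 * (d : ℝ)) / 8) * g i * g j
        - (1/8 : ℝ) * (if i = j then ∑ k, (g k) ^ 2 else 0)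
        + (1/2 : ℝ) * (g i * u j + g j * u i)) :
    (∑ i, ∑ j, (H i j) ^ 2) - (∑ i, ∑ j, M i j * v i * v j)
        - (∑ i, g i * ∑ j, H i j * v j)
        + Matrix.trace H * (∑ i, v i * g i)
        + (∑ i, v i * u i) * (∑ i, v i * g i) =
      (∑ i, ∑ j, (𝔥 i j) ^ 2) + ∑ i, ∑ j, R i j * v i * v j := by
  have h𝔥_eq : 𝔥 = H + ((g ⬝ᵥ v) / 2) • 1 + (-1/4 : ℝ) • symmVecMulVec g v := by
    ext i j
    simp only [h𝔥, Matrix.add_apply, Matrix.smul_apply, one_apply, symmVecMulVec_apply,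
      smul_eq_mul, dotProduct]
    split_ifs with hij
    · subst hij
      ring
    · ring
  have hR_eq : R = -M + ((3 - 2 * (d : ℝ)) / 8) • vecMulVec g g - ((g ⬝ᵥ g) / 8) • 1
      + (1/2 : ℝ) • symmVecMulVec g u := by
    ext i j
    simp only [hR, Matrix.add_apply, Matrix.sub_apply, Matrix.neg_apply, Matrix.smul_apply,
      one_apply, vecMulVec_apply, symmVecMulVec_apply, smul_eq_mul, dotProduct, sq]
    split_ifs <;> ring
  have h𝔥_symm : 𝔥.IsSymm :=
    h𝔥_eq ▸ (hH.add (isSymm_one.smul _)).add ((isSymm_symmVecMulVec g v).smul _)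
  rw [sum_sum_sq_eq_trace_mul_self hH, sum_sum_sq_eq_trace_mul_self h𝔥_symm,
    sum_sum_mul_mul_eq_dotProduct_mulVec, sum_sum_mul_mul_eq_dotProduct_mulVec, h𝔥_eq,
    trace_mul_self_add_smul_one_add_smul_symmVecMulVec hH, hR_eq]
  simp only [add_mulVec, sub_mulVec, neg_mulVec, smul_mulVec, one_mulVec, dotProduct_add,
    dotProduct_sub, dotProduct_neg, dotProduct_smul, dotProduct_vecMulVec_mulVec,
    dotProduct_symmVecMulVec_mulVec, Fintype.card_fin, smul_eq_mul]
  change _ - _ - g ⬝ᵥ H *ᵥ v + trace H * (v ⬝ᵥ g) + (v ⬝ᵥ u) * (v ⬝ᵥ g) = _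
  rw [dotProduct_comm v u, dotProduct_comm v g]
  ring

/-- Completing-the-square linear algebra identity underlying the information
Gamma calculus: with `𝔥` and `R` built from symmetric matrices `H`, `M` and
vectors `v`, `g`, `u`,
`‖H‖_F² − ⟨M v, v⟩ − ⟨g, H v⟩ + (tr H)⟨v, g⟩ + ⟨v, u⟩⟨v, g⟩ = ‖𝔥‖_F² + ⟨R v, v⟩`. -/
theorem completing_the_square_identity
    (d : ℕ) (hd : 1 ≤ d)
    (H M : Matrix (Fin d) (Fin d) ℝ) (hH : H.IsSymm) (hM : M.IsSymm)
    (v g u : Fin d → ℝ)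
    (𝔥 R : Matrix (Fin d) (Fin d) ℝ)
    (h𝔥 : ∀ i j, 𝔥 i j =
      if i = j then
        H i i + (1/2 : ℝ) * (∑ k, g k * v k) - (1/2 : ℝ) * g i * v i
      else
        H i j - (1/4 : ℝ) * (g i * v j + g j * v i))
    (hR : ∀ i j, R i j =
      -M i j + ((3 - 2 * (d : ℝ)) / 8) * g i * g j
        - (1/8 : ℝ) * (if i = j then ∑ k, (g k) ^ 2 else 0)
        + (1/2 : ℝ) * (g i * u j + g j * u i)) :
    (∑ i, ∑ j, (H i j) ^ 2) - (∑ i, ∑ j, M i j * v i * v j)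
        - (∑ i, g i * ∑ j, H i j * v j)
        + Matrix.trace H * (∑ i, v i * g i)
        + (∑ i, v i * u i) * (∑ i, v i * g i) =
      (∑ i, ∑ j, (𝔥 i j) ^ 2) + ∑ i, ∑ j, R i j * v i * v j :=
  completing_the_square_identity_general d H M hH v g u 𝔥 R h𝔥 hR
end

section
/- Claim (i) in the proof of Lemma 3.1: let f : ℝ^d → ℝ be smooth with compact support and set p := π·e^f. Define L̃*p := −∇·(p ∇ log π) + Δp. Then ∫_{ℝ^d} Γ₂(f,f)(x) p(x) dx = ∫_{ℝ^d} L̃f(x)·L̃*p(x) dx + ½ ∫_{ℝ^d} Γ₁(f,f)(x)·L̃*p(x) dx. -/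
open MeasureTheory
open scoped BigOperators

noncomputable section

/-! With `p = π e^f` one has `p ∇f = ∇p − p ∇log π`, so `L̃*p = ∇·(p ∇f)` and, after
integrating by parts, `∫ Γ₁(g, f) p = −∫ g L̃*p` for compactly supported `g`. Integrating the
Laplacian in `L̃h` by parts as well gives `∫ (L̃h) p = −∫ Γ₁(h, f) p`, hence `∫ (L̃h) p = ∫ h L̃*p`.
Applying the first identity to `g = L̃f` and the last one to `h = Γ₁(f, f)` in
`Γ₂(f, f) = ½ L̃Γ₁(f, f) − Γ₁(L̃f, f)` gives the claim. -/

open scoped ContDiff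

section

variable {d : ℕ}

local notation "𝕏" => EuclideanSpace ℝ (Fin d)

variable {f g h p π u v : EuclideanSpace ℝ (Fin d) → ℝ} {m n : WithTop ℕ∞}

theorem pderiv'_eq_zero_of_notMem_tsupport {x : 𝕏} (hx : x ∉ tsupport g) (i : Fin d) :
    pderiv' g i x = 0 := by
  simp [pderiv', fderiv_of_notMem_tsupport ℝ hx]

theorem tsupport_pderiv'_subset (g : 𝕏 → ℝ) (i : Fin d) :
    tsupport (pderiv' g i) ⊆ tsupport g :=
  tsupport_fderiv_apply_subset ℝ _

protected theorem HasCompactSupport.pderiv' (hg : HasCompactSupport g) (i : Fin d) :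
    HasCompactSupport (pderiv' g i) :=
  hg.fderiv_apply ℝ _

theorem gamma1_comm (g h : 𝕏 → ℝ) : Gamma1 g h = Gamma1 h g := by
  ext x
  simp only [Gamma1, mul_comm]

protected theorem HasCompactSupport.gamma1 (hg : HasCompactSupport g) (h : 𝕏 → ℝ) :
    HasCompactSupport (Gamma1 g h) :=
  .intro hg fun x hx => by simp [Gamma1, pderiv'_eq_zero_of_notMem_tsupport hx]

protected theorem HasCompactSupport.lap (hh : HasCompactSupport h) : HasCompactSupport (lap h) :=
  .intro hh fun x hx => by
    simp [lap, pderiv2, pderiv'_eq_zero_of_notMem_tsupport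
      (fun hx' => hx (tsupport_pderiv'_subset h _ hx'))]

protected theorem HasCompactSupport.genL (hh : HasCompactSupport h) (π : 𝕏 → ℝ) :
    HasCompactSupport (genL π h) := by
  have hsum := (hh.gamma1 fun y => Real.log (π y)).add hh.lap
  rwa [gamma1_comm] at hsum

protected theorem ContDiff.pderiv' (hg : ContDiff ℝ n g) (hmn : m + 1 ≤ n) (i : Fin d) :
    ContDiff ℝ m (pderiv' g i) :=
  (hg.fderiv_right hmn).clm_apply contDiff_const

theorem ContDiff.continuous_pderiv' (hg : ContDiff ℝ n g) (hn : n ≠ 0) (i : Fin d) :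
    Continuous (pderiv' g i) :=
  (hg.continuous_fderiv hn).clm_apply continuous_const

protected theorem ContDiff.gamma1 (hg : ContDiff ℝ n g) (hh : ContDiff ℝ n h)
    (hmn : m + 1 ≤ n) :
    ContDiff ℝ m (Gamma1 g h) :=
  .sum fun i _ => (hg.pderiv' hmn i).mul (hh.pderiv' hmn i)

protected theorem ContDiff.lap (hh : ContDiff ℝ n h) (hmn : m + 2 ≤ n) :
    ContDiff ℝ m (lap h) :=
  .sum fun i _ => (hh.pderiv' (m := m + 1) (by rwa [add_assoc, one_add_one_eq_two]) i).pderiv'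
    le_rfl i

protected theorem ContDiff.genL (hπ : ContDiff ℝ n fun x => Real.log (π x))
    (hh : ContDiff ℝ n h) (hmn : m + 2 ≤ n) : ContDiff ℝ m (genL π h) :=
  (hπ.gamma1 hh (le_trans (by gcongr; exact one_le_two) hmn)).add (hh.lap hmn)

theorem integrable_mul_of_hasCompactSupport {a b : 𝕏 → ℝ} (ha : Continuous a)
    (hb : Continuous b) (hac : HasCompactSupport a) : Integrable fun x => a x * b x :=
  (ha.mul hb).integrable_of_hasCompactSupport hac.mul_right

theorem integral_mul_pderiv'_eq_neg (hu : ContDiff ℝ 1 u) (huc : HasCompactSupport u)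
    (hv : ContDiff ℝ 1 v) (i : Fin d) :
    ∫ x, u x * pderiv' v i x = -∫ x, pderiv' u i x * v x :=
  integral_mul_fderiv_eq_neg_fderiv_mul_of_integrable
    (integrable_mul_of_hasCompactSupport (hu.continuous_pderiv' one_ne_zero i) hv.continuous
      (huc.pderiv' i))
    (integrable_mul_of_hasCompactSupport hu.continuous (hv.continuous_pderiv' one_ne_zero i) huc)
    (integrable_mul_of_hasCompactSupport hu.continuous hv.continuous huc)
    (fun _ _ => (hu.differentiable one_ne_zero).differentiableAt)
    (fun _ _ => (hv.differentiable one_ne_zero).differentiableAt)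

theorem integral_sum_pderiv'_mul_eq_neg (hg : ContDiff ℝ 1 g) (hgc : HasCompactSupport g)
    {w : Fin d → 𝕏 → ℝ} (hw : ∀ i, ContDiff ℝ 1 (w i)) :
    ∫ x, ∑ i, pderiv' g i x * w i x = -∫ x, g x * ∑ i, pderiv' (w i) i x := by
  simp_rw [Finset.mul_sum]
  rw [integral_finsetSum _ fun i _ => integrable_mul_of_hasCompactSupport
      (hg.continuous_pderiv' one_ne_zero i) (hw i).continuous (hgc.pderiv' i),
    integral_finsetSum _ fun i _ => integrable_mul_of_hasCompactSupport
      hg.continuous ((hw i).continuous_pderiv' one_ne_zero i) hgc,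
    ← Finset.sum_neg_distrib]
  refine Finset.sum_congr rfl fun i _ => ?_
  rw [integral_mul_pderiv'_eq_neg hg hgc (hw i), neg_neg]

theorem integral_lap_mul_eq_neg (hh : ContDiff ℝ 2 h) (hhc : HasCompactSupport h)
    (hp : ContDiff ℝ 1 p) : ∫ x, lap h x * p x = -∫ x, Gamma1 h p x := by
  have hh' (i : Fin d) : ContDiff ℝ 1 (pderiv' h i) := hh.pderiv' (by norm_num) i
  simp only [lap, pderiv2, Gamma1, Finset.sum_mul]
  rw [integral_finsetSum _ fun i _ => integrable_mul_of_hasCompactSupport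
      ((hh' i).continuous_pderiv' one_ne_zero i) hp.continuous ((hhc.pderiv' i).pderiv' i),
    integral_finsetSum _ fun i _ => integrable_mul_of_hasCompactSupport
      (hh' i).continuous (hp.continuous_pderiv' one_ne_zero i) (hhc.pderiv' i),
    ← Finset.sum_neg_distrib]
  refine Finset.sum_congr rfl fun i _ => ?_
  rw [integral_mul_pderiv'_eq_neg (hh' i) (hhc.pderiv' i) hp, neg_neg]

theorem pderiv'_sub {a b : 𝕏 → ℝ} {x : 𝕏} (ha : DifferentiableAt ℝ a x)
    (hb : DifferentiableAt ℝ b x) (i : Fin d) :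
    pderiv' (fun y => a y - b y) i x = pderiv' a i x - pderiv' b i x := by
  simp [pderiv', fderiv_fun_sub ha hb]

theorem mul_exp_mul_pderiv' {x : 𝕏} (hπ : DifferentiableAt ℝ π x) (hπ0 : π x ≠ 0)
    (hf : DifferentiableAt ℝ f x) (i : Fin d) :
    π x * Real.exp (f x) * pderiv' f i x =
      pderiv' (fun y => π y * Real.exp (f y)) i x
        - π x * Real.exp (f x) * pderiv' (fun y => Real.log (π y)) i x := by
  have hp : pderiv' (fun y => π y * Real.exp (f y)) i x
      = π x * (Real.exp (f x) * pderiv' f i x) + Real.exp (f x) * pderiv' π i x := by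
    rw [pderiv', (hπ.hasFDerivAt.fun_mul hf.hasFDerivAt.exp).fderiv]
    simp [pderiv']
  have hlog : pderiv' (fun y => Real.log (π y)) i x = (π x)⁻¹ * pderiv' π i x := by
    simp [pderiv', (hπ.hasFDerivAt.log hπ0).fderiv]
  rw [hp, hlog]
  field_simp
  ring

theorem ltilstar_mul_exp (hπ : ContDiff ℝ 2 π) (hπ0 : ∀ x, π x ≠ 0)
    (hf : ContDiff ℝ 2 f) (x : 𝕏) :
    Ltilstar π (fun y => π y * Real.exp (f y)) x
      = ∑ i, pderiv' (fun y => π y * Real.exp (f y) * pderiv' f i y) i x := by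
  set p : 𝕏 → ℝ := fun y => π y * Real.exp (f y)
  have hp : ContDiff ℝ 2 p := hπ.mul (Real.contDiff_exp.comp hf)
  have hlog : ContDiff ℝ 2 fun y => Real.log (π y) := hπ.log hπ0
  have hflux (i : Fin d) : (fun y => π y * Real.exp (f y) * pderiv' f i y)
      = fun y => pderiv' p i y - p y * pderiv' (fun z => Real.log (π z)) i y :=
    funext fun y => mul_exp_mul_pderiv' (hπ.differentiable two_ne_zero y) (hπ0 y)
      (hf.differentiable two_ne_zero y) i
  simp only [Ltilstar, lap, pderiv2, hflux]
  have hgrad (i : Fin d) : ContDiff ℝ 1 (pderiv' p i) := hp.pderiv' (by norm_num) i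
  have hdrift (i : Fin d) : ContDiff ℝ 1 fun y => p y * pderiv' (fun z => Real.log (π z)) i y :=
    (hp.of_le one_le_two).mul (hlog.pderiv' (by norm_num) i)
  rw [Finset.sum_congr rfl fun i _ => pderiv'_sub ((hgrad i).differentiable one_ne_zero x)
      ((hdrift i).differentiable one_ne_zero x) i,
    Finset.sum_sub_distrib]
  ring

theorem integral_gamma1_mul_eq_neg_integral_mul_ltilstar (hg : ContDiff ℝ 1 g)
    (hgc : HasCompactSupport g) (hπ : ContDiff ℝ 2 π) (hπ0 : ∀ x, π x ≠ 0)
    (hf : ContDiff ℝ 2 f) :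
    ∫ x, Gamma1 g f x * (π x * Real.exp (f x))
      = -∫ x, g x * Ltilstar π (fun y => π y * Real.exp (f y)) x := by
  have hflux (i : Fin d) : ContDiff ℝ 1 fun y => π y * Real.exp (f y) * pderiv' f i y :=
    ((hπ.mul (Real.contDiff_exp.comp hf)).of_le one_le_two).mul (hf.pderiv' (by norm_num) i)
  simp_rw [ltilstar_mul_exp hπ hπ0 hf]
  rw [← integral_sum_pderiv'_mul_eq_neg hg hgc hflux]
  congr 1
  ext x
  simp only [Gamma1, Finset.sum_mul]
  exact Finset.sum_congr rfl fun i _ => by ring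

theorem integral_genL_mul_eq_neg_integral_gamma1_mul (hh : ContDiff ℝ 2 h)
    (hhc : HasCompactSupport h) (hπ : ContDiff ℝ 1 π) (hπ0 : ∀ x, π x ≠ 0)
    (hf : ContDiff ℝ 1 f) :
    ∫ x, genL π h x * (π x * Real.exp (f x))
      = -∫ x, Gamma1 h f x * (π x * Real.exp (f x)) := by
  set p : 𝕏 → ℝ := fun y => π y * Real.exp (f y)
  have hp : ContDiff ℝ 1 p := hπ.mul (Real.contDiff_exp.comp hf)
  have hlog : ContDiff ℝ 1 fun y => Real.log (π y) := hπ.log hπ0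
  have hdrift : Integrable fun x => Gamma1 (fun y => Real.log (π y)) h x * p x := by
    rw [gamma1_comm]
    exact integrable_mul_of_hasCompactSupport
      ((hh.of_le one_le_two).gamma1 hlog (m := 0) (by norm_num)).continuous hp.continuous
      (hhc.gamma1 _)
  have hlap : Integrable fun x => lap h x * p x :=
    integrable_mul_of_hasCompactSupport (hh.lap (m := 0) (by norm_num)).continuous
      hp.continuous hhc.lap
  have hgrad : Integrable fun x => Gamma1 h p x :=
    ((hh.of_le one_le_two).gamma1 hp (m := 0) (by norm_num)).continuous
      |>.integrable_of_hasCompactSupport (hhc.gamma1 p)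
  calc ∫ x, genL π h x * p x
      = (∫ x, Gamma1 (fun y => Real.log (π y)) h x * p x) + ∫ x, lap h x * p x := by
        simp only [genL, add_mul]
        exact integral_add hdrift hlap
    _ = ∫ x, (Gamma1 (fun y => Real.log (π y)) h x * p x - Gamma1 h p x) := by
        rw [integral_lap_mul_eq_neg hh hhc hp, integral_sub hdrift hgrad, sub_eq_add_neg]
    _ = -∫ x, Gamma1 h f x * p x := by
        rw [← integral_neg]
        congr 1
        funext x
        simp only [Gamma1, Finset.sum_mul, ← Finset.sum_sub_distrib, ← Finset.sum_neg_distrib]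
        refine Finset.sum_congr rfl fun i _ => ?_
        linear_combination pderiv' h i x * mul_exp_mul_pderiv'
          (hπ.differentiable one_ne_zero x) (hπ0 x) (hf.differentiable one_ne_zero x) i

theorem integral_genL_mul_eq_integral_mul_ltilstar (hh : ContDiff ℝ 2 h)
    (hhc : HasCompactSupport h) (hπ : ContDiff ℝ 2 π) (hπ0 : ∀ x, π x ≠ 0)
    (hf : ContDiff ℝ 2 f) :
    ∫ x, genL π h x * (π x * Real.exp (f x))
      = ∫ x, h x * Ltilstar π (fun y => π y * Real.exp (f y)) x := by
  rw [integral_genL_mul_eq_neg_integral_gamma1_mul hh hhc (hπ.of_le one_le_two) hπ0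
      (hf.of_le one_le_two),
    integral_gamma1_mul_eq_neg_integral_mul_ltilstar (hh.of_le one_le_two) hhc hπ hπ0 hf, neg_neg]

end

theorem claim_i_gamma_two_weak_general
    (d : ℕ)
    (π : EuclideanSpace ℝ (Fin d) → ℝ) (hπ : ContDiff ℝ (⊤ : ℕ∞) π)
    (hπpos : ∀ x, 0 < π x)
    (f : EuclideanSpace ℝ (Fin d) → ℝ) (hf : ContDiff ℝ (⊤ : ℕ∞) f)
    (hfc : HasCompactSupport f) :
    ∫ x, Gamma2 π f x * (π x * Real.exp (f x)) =
      (∫ x, genL π f x * Ltilstar π (fun y => π y * Real.exp (f y)) x)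
        + (1/2 : ℝ) * ∫ x, Gamma1 f f x * Ltilstar π (fun y => π y * Real.exp (f y)) x := by
  have hπ0 : ∀ x, π x ≠ 0 := fun x => (hπpos x).ne'
  have hlog : ContDiff ℝ ∞ fun x => Real.log (π x) := hπ.log hπ0
  have hΓ : ContDiff ℝ ∞ (Gamma1 f f) := hf.gamma1 hf (by norm_cast)
  have hLf : ContDiff ℝ ∞ (genL π f) := hlog.genL hf (by norm_cast)
  have hp : Continuous fun x => π x * Real.exp (f x) :=
    hπ.continuous.mul (Real.continuous_exp.comp hf.continuous)
  have hLΓ : Integrable fun x => genL π (Gamma1 f f) x * (π x * Real.exp (f x)) :=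
    integrable_mul_of_hasCompactSupport (hlog.genL hΓ (m := 0) (by norm_cast)).continuous hp
      ((hfc.gamma1 f).genL π)
  have hΓL : Integrable fun x => Gamma1 (genL π f) f x * (π x * Real.exp (f x)) :=
    integrable_mul_of_hasCompactSupport (hLf.gamma1 hf (m := 0) (by norm_cast)).continuous hp
      ((hfc.genL π).gamma1 f)
  have hπ2 : ContDiff ℝ 2 π := hπ.of_le (by norm_cast)
  have hf2 : ContDiff ℝ 2 f := hf.of_le (by norm_cast)
  calc ∫ x, Gamma2 π f x * (π x * Real.exp (f x))
      = (1/2 : ℝ) * (∫ x, genL π (Gamma1 f f) x * (π x * Real.exp (f x)))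
          - ∫ x, Gamma1 (genL π f) f x * (π x * Real.exp (f x)) := by
        rw [← integral_const_mul, ← integral_sub (hLΓ.const_mul _) hΓL]
        congr 1
        funext x
        simp only [Gamma2]
        ring
    _ = _ := by
        rw [integral_genL_mul_eq_integral_mul_ltilstar (hΓ.of_le (by norm_cast)) (hfc.gamma1 f)
            hπ2 hπ0 hf2,
          integral_gamma1_mul_eq_neg_integral_mul_ltilstar (hLf.of_le (by norm_cast))
            (hfc.genL π) hπ2 hπ0 hf2]
        ring

/-- Claim (i) in the proof of Lemma 3.1:
`∫ Γ₂(f,f) p = ∫ L̃f · L̃*p + ½ ∫ Γ₁(f,f) · L̃*p` where `p = π e^f`. -/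
theorem claim_i_gamma_two_weak
    (d : ℕ) (hd : 1 ≤ d)
    (π : EuclideanSpace ℝ (Fin d) → ℝ) (hπ : ContDiff ℝ (⊤ : ℕ∞) π)
    (hπpos : ∀ x, 0 < π x)
    (f : EuclideanSpace ℝ (Fin d) → ℝ) (hf : ContDiff ℝ (⊤ : ℕ∞) f)
    (hfc : HasCompactSupport f) :
    ∫ x, Gamma2 π f x * (π x * Real.exp (f x)) =
      (∫ x, genL π f x * Ltilstar π (fun y => π y * Real.exp (f y)) x)
        + (1/2 : ℝ) * ∫ x, Gamma1 f f x * Ltilstar π (fun y => π y * Real.exp (f y)) x :=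
  claim_i_gamma_two_weak_general d π hπ hπpos f hf hfc

end
end
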